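/- Let k be a field, p ≥ 1 an integer, and let T = ((V_s)_{s ∈ ℤ/p}, (x_s : V_s → V_{s+1})_{s ∈ ℤ/p}) be a nilpotent finite-dimensional representation of the cyclic quiver with p vertices over k. If every short exact sequence of representations 0 → T → E → T → 0 splits (i.e., T admits no nontrivial self-extension), then there exists a vertex u ∈ ℤ/p with V_u = 0. Equivalently, the class of T in the Grothendieck group lies in the span of the simple classes [S^{(l)}] for l ≠ u, i.e., T has no composition factor isomorphic to the simple S^{(u)}. -/

import Mathlib

/-!
A rigid nilpotent representation of the cyclic quiver misses a vertex.

We encode a (finite-dimensional) representation of the cyclic quiver with `p`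
vertices over a field `k`, of dimension vector `d : ZMod p → ℕ`, as a single
matrix `X` on the total space `⊕_{s} k^{d s}` supported on the blocks
`s → s + 1`; the `(s+1, s)` block of `X` is the structure map `x_s : V_s → V_{s+1}`.
The representation is nilpotent exactly when `X ^ m = 0` for some `m`, i.e. when all
sufficiently long composites of the structure maps vanish.  Morphisms of
representations are block-diagonal (vertex-wise) matrices intertwining the structure
matrices, and a short exact sequence `0 → T → E → T → 0` is given by an injective
morphism `ι : T → E` and a surjective morphism `π : E → T` with
`range ι = ker π`; it splits when there is a retraction `ρ : E → T`, i.e. a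
morphism with `ρ * ι = 1`.
-/

/-- The index set of the total space `⊕_{s : ZMod p} k^{d s}`. -/
abbrev CycIdx (p : ℕ) (d : ZMod p → ℕ) := Σ s : ZMod p, Fin (d s)

/-- A matrix on the total space is supported on the arrows `s → s + 1` of the
cyclic quiver. -/
def CycSupported (p : ℕ) [NeZero p] (k : Type) [Field k] (d : ZMod p → ℕ)
    (X : Matrix (CycIdx p d) (CycIdx p d) k) : Prop :=
  ∀ a b : CycIdx p d, b.1 ≠ a.1 + 1 → X b a = 0

/-- A block-diagonal matrix, i.e. a family of linear maps indexed by the vertices of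
the cyclic quiver. -/
def CycBlockDiag (p : ℕ) [NeZero p] (k : Type) [Field k] (d e : ZMod p → ℕ)
    (f : Matrix (CycIdx p e) (CycIdx p d) k) : Prop :=
  ∀ (b : CycIdx p e) (a : CycIdx p d), b.1 ≠ a.1 → f b a = 0

/-
A split self-extension `0 → T → E → T → 0` with `E = [[X, Δ], [0, X]]` makes `Δ` a commutator
`Xρ - ρX`, and commutators are orthogonal to the centraliser of `X` under the trace form:
`tr (G (Xρ - ρX)) = tr ((GX - XG) ρ) = 0`. Taking for `Δ` the elementary matrices raising the
vertex by one, rigidity forces every `G` that commutes with `X` and lowers the vertex by one to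
vanish. If no vertex is missing, such a `G ≠ 0` exists: let `q + 1` be the smallest nilpotency
order of `X` on a single `V_s`, pick a basis vector `y ∈ V_s` and a row `r` with `(X ^ q) r u ≠ 0`
for some `u ∈ V_{s+1}`, and put `G = ∑_{i+j=q} X^i E_{yr} X^j`. Then
`XG - GX = X^{q+1} E_{yr} - E_{yr} X^{q+1}`, and both terms vanish because `X^{q+1}` kills `V_s`.
-/

open Matrix Finset

section Ring

variable {R : Type*} [Semiring R] {x r : R} {n : ℕ}

theorem commute_sum_antidiagonal_pow_mul_pow (hl : x ^ (n + 1) * r = 0)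
    (hr : r * x ^ (n + 1) = 0) :
    Commute (∑ ij ∈ antidiagonal n, x ^ ij.1 * r * x ^ ij.2) x := by
  have hxG : x * ∑ ij ∈ antidiagonal n, x ^ ij.1 * r * x ^ ij.2 =
      ∑ ij ∈ antidiagonal (n + 1), x ^ ij.1 * r * x ^ ij.2 := by
    rw [Nat.sum_antidiagonal_succ, pow_zero, one_mul, hr, zero_add, mul_sum]
    simp only [pow_succ', mul_assoc]
  have hGx : (∑ ij ∈ antidiagonal n, x ^ ij.1 * r * x ^ ij.2) * x =
      ∑ ij ∈ antidiagonal (n + 1), x ^ ij.1 * r * x ^ ij.2 := by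
    rw [Nat.sum_antidiagonal_succ', pow_zero, mul_one, hl, zero_add, sum_mul]
    simp only [pow_succ, mul_assoc]
  exact hGx.trans hxG.symm

theorem pow_mul_sum_antidiagonal_pow_mul_pow {j : ℕ} (hl : x ^ (j + 1) * r = 0) :
    x ^ j * ∑ ij ∈ antidiagonal n, x ^ ij.1 * r * x ^ ij.2 = x ^ j * r * x ^ n := by
  rw [mul_sum, sum_eq_single_of_mem (0, n) (HasAntidiagonal.mem_antidiagonal.2 (zero_add n))]
  · simp only [pow_zero, one_mul, mul_assoc]
  rintro ⟨_ | i, i'⟩ hii' hne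
  · rw [HasAntidiagonal.mem_antidiagonal, zero_add] at hii'
    exact absurd (by rw [← hii']) hne
  · calc x ^ j * (x ^ (i + 1) * r * x ^ i') = x ^ i * (x ^ (j + 1) * r) * x ^ i' := by
          rw [← mul_assoc, ← mul_assoc, ← pow_add, add_left_comm, pow_add, mul_assoc (x ^ i)]
      _ = 0 := by rw [hl, mul_zero, zero_mul]

end Ring

theorem IsNilpotent.exists_pow_mul_ne_zero_and_pow_succ_mul_eq_zero {M : Type*}
    [MonoidWithZero M] {x y : M} (hx : IsNilpotent x) (hy : y ≠ 0) :
    ∃ j, x ^ j * y ≠ 0 ∧ x ^ (j + 1) * y = 0 := by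
  classical
  obtain ⟨m, hm⟩ := hx
  have hex : ∃ j, x ^ (j + 1) * y = 0 := ⟨m, by rw [_root_.pow_succ, hm, zero_mul, zero_mul]⟩
  refine ⟨Nat.find hex, ?_, Nat.find_spec hex⟩
  cases h : Nat.find hex with
  | zero => simpa using hy
  | succ j => exact Nat.find_min hex (h ▸ lt_add_one j)

namespace Matrix

section Homogeneous

variable {l m n l' n' A R : Type*} [AddCommMonoid A] {gl : l → A} {gm : m → A} {gn : n → A}
  {a b c : A}

def IsHomogeneous [Zero R] (gm : m → A) (gn : n → A) (c : A) (M : Matrix m n R) : Prop :=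
  ∀ i j, gm i ≠ gn j + c → M i j = 0

theorem isHomogeneous_zero [Zero R] : IsHomogeneous gm gn c (0 : Matrix m n R) :=
  fun _ _ _ => rfl

theorem isHomogeneous_one [DecidableEq m] [Zero R] [One R] (g : m → A) :
    IsHomogeneous g g 0 (1 : Matrix m m R) :=
  fun _ _ h => one_apply_ne fun hij => h (by rw [hij, add_zero])

theorem IsHomogeneous.mul [Fintype m] [NonUnitalNonAssocSemiring R] {M : Matrix l m R}
    {N : Matrix m n R} (hM : IsHomogeneous gl gm a M) (hN : IsHomogeneous gm gn b N) :
    IsHomogeneous gl gn (b + a) (M * N) := by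
  intro i j hij
  rw [mul_apply]
  refine sum_eq_zero fun x _ => ?_
  by_cases hx : gl i = gm x + a
  · rw [hN x j fun h => hij (by rw [hx, h, add_assoc]), mul_zero]
  · rw [hM i x hx, zero_mul]

theorem IsHomogeneous.pow [Fintype m] [DecidableEq m] [Semiring R] {g : m → A}
    {M : Matrix m m R} (hM : IsHomogeneous g g c M) : ∀ q : ℕ, IsHomogeneous g g (q • c) (M ^ q)
  | 0 => by simpa using isHomogeneous_one g
  | q + 1 => by simpa only [pow_succ, succ_nsmul'] using (hM.pow q).mul hM

theorem IsHomogeneous.sum [AddCommMonoid R] {ι : Type*} (s : Finset ι) {M : ι → Matrix m n R}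
    (h : ∀ x ∈ s, IsHomogeneous gm gn c (M x)) : IsHomogeneous gm gn c (∑ x ∈ s, M x) :=
  fun i j hij => by rw [sum_apply]; exact sum_eq_zero fun x hx => h x hx i j hij

theorem IsHomogeneous.submatrix [Zero R] {M : Matrix m n R} (hM : IsHomogeneous gm gn c M)
    (f : l → m) (f' : n' → n) : IsHomogeneous (gm ∘ f) (gn ∘ f') c (M.submatrix f f') :=
  fun i j => hM (f i) (f' j)

theorem IsHomogeneous.fromBlocks [Zero R] {gm' : l → A} {gn' : n' → A}
    {M₁₁ : Matrix m n R} {M₁₂ : Matrix m n' R} {M₂₁ : Matrix l n R} {M₂₂ : Matrix l n' R}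
    (h₁₁ : IsHomogeneous gm gn c M₁₁) (h₁₂ : IsHomogeneous gm gn' c M₁₂)
    (h₂₁ : IsHomogeneous gm' gn c M₂₁) (h₂₂ : IsHomogeneous gm' gn' c M₂₂) :
    IsHomogeneous (Sum.elim gm gm') (Sum.elim gn gn') c (fromBlocks M₁₁ M₁₂ M₂₁ M₂₂) := by
  rintro (i | i) (j | j)
  exacts [h₁₁ i j, h₁₂ i j, h₂₁ i j, h₂₂ i j]

theorem IsHomogeneous.fromRows [Zero R] {gm' : l → A} {M₁ : Matrix m n R} {M₂ : Matrix l n R}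
    (h₁ : IsHomogeneous gm gn c M₁) (h₂ : IsHomogeneous gm' gn c M₂) :
    IsHomogeneous (Sum.elim gm gm') gn c (fromRows M₁ M₂) := by
  rintro (i | i) j
  exacts [h₁ i j, h₂ i j]

theorem IsHomogeneous.fromCols [Zero R] {gn' : n' → A} {M₁ : Matrix m n R} {M₂ : Matrix m n' R}
    (h₁ : IsHomogeneous gm gn c M₁) (h₂ : IsHomogeneous gm gn' c M₂) :
    IsHomogeneous gm (Sum.elim gn gn') c (fromCols M₁ M₂) := by
  rintro i (j | j)
  exacts [h₁ i j, h₂ i j]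

theorem IsHomogeneous.exists_apply_ne_zero [Zero R] {M : Matrix m n R}
    (hM : IsHomogeneous gm gn c M) (h : M ≠ 0) : ∃ i j, gm i = gn j + c ∧ M i j ≠ 0 := by
  by_contra! hcon
  exact h (ext fun i j => by
    by_cases hij : gm i = gn j + c
    exacts [hcon i j hij, hM i j hij])

end Homogeneous

theorem isHomogeneous_single {m n A R : Type*} [AddCommGroup A] [DecidableEq m] [DecidableEq n]
    [Zero R] (gm : m → A) (gn : n → A) (i : m) (j : n) (x : R) :
    IsHomogeneous gm gn (gm i - gn j) (single i j x) := by
  intro a b h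
  refine single_apply_of_ne _ _ _ _ _ ?_
  rintro ⟨rfl, rfl⟩
  exact h (by abel)

section Single

variable {l m n α : Type*} [Fintype m] [DecidableEq m] [NonUnitalNonAssocSemiring α]

theorem mul_single_eq_zero [DecidableEq n] {M : Matrix l m α} {i : m} (h : ∀ a, M a i = 0)
    (j : n) (c : α) : M * single i j c = 0 := by
  ext a b
  by_cases hb : b = j
  · rw [hb, mul_single_apply_same, h, zero_mul, zero_apply]
  · rw [mul_single_apply_of_ne _ _ _ _ _ hb, zero_apply]

theorem single_mul_eq_zero [DecidableEq l] {N : Matrix m n α} {j : m} (h : ∀ b, N j b = 0)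
    (i : l) (c : α) : single i j c * N = 0 := by
  ext a b
  by_cases ha : a = i
  · rw [ha, single_mul_apply_same, h, mul_zero, zero_apply]
  · rw [single_mul_apply_of_ne _ _ _ _ _ ha, zero_apply]

theorem mul_single_mul_apply {k : Type*} [Fintype k] [DecidableEq k]
    (M : Matrix l m α) (i : m) (j : k) (c : α) (N : Matrix k n α) (a : l) (b : n) :
    (M * single i j c * N) a b = M a i * c * N j b := by
  rw [mul_apply, sum_eq_single j, mul_single_apply_same]
  · exact fun x _ hx => by rw [mul_single_apply_of_ne _ _ _ _ _ hx, zero_mul]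
  · exact fun h => absurd (mem_univ j) h

end Single

theorem exists_fiber_of_minimal_nilpotency_order {n V R : Type*} [Fintype n] [DecidableEq n]
    [Semiring R] [Nontrivial R] [Finite V] [Nonempty V] {g : n → V} {M : Matrix n n R}
    (hM : IsNilpotent M) (hg : Function.Surjective g) (f : V → V) :
    ∃ s q, (∀ i j, g j = s → (M ^ (q + 1)) i j = 0) ∧ ∃ i j, g j = f s ∧ (M ^ q) i j ≠ 0 := by
  classical
  obtain ⟨m, hm⟩ := hM
  have hex : ∀ s, ∃ q, ∀ i j, g j = s → (M ^ q) i j = 0 := fun s => ⟨m, by simp [hm]⟩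
  obtain ⟨s, hs⟩ := Finite.exists_min fun s => Nat.find (hex s)
  obtain ⟨j, rfl⟩ := hg s
  have hpos : 0 < Nat.find (hex (g j)) := Nat.pos_of_ne_zero fun h => by
    simpa using (Nat.find_eq_zero (hex (g j))).1 h j j rfl
  refine ⟨g j, Nat.find (hex (g j)) - 1, ?_, ?_⟩
  · rw [Nat.sub_add_cancel hpos]
    exact Nat.find_spec (hex _)
  · have := Nat.find_min (hex (f (g j))) ((Nat.sub_lt hpos one_pos).trans_le (hs _))
    push Not at this
    exact this

theorem trace_mul_commutator_eq_zero {n R : Type*} [Fintype n] [CommRing R]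
    {G X : Matrix n n R} (h : Commute G X) (ρ : Matrix n n R) :
    trace (G * (X * ρ - ρ * X)) = 0 := by
  rw [mul_sub, trace_sub, ← mul_assoc, h.eq, mul_assoc, trace_mul_comm X, mul_assoc, sub_self]

theorem eq_commutator_of_retraction {m n R : Type*} [Fintype m] [DecidableEq m]
    [Fintype n] [Ring R] {X Δ : Matrix m m R} {Y : Matrix n n R} {ι₁ ι₂ : Matrix n m R}
    {ρ : Matrix m n R} (hY : Y * ι₂ = ι₁ * Δ + ι₂ * X) (hρY : ρ * Y = X * ρ) (hρι₁ : ρ * ι₁ = 1) :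
    Δ = X * (ρ * ι₂) - ρ * ι₂ * X :=
  calc Δ = ρ * (ι₁ * Δ) := by rw [← Matrix.mul_assoc, hρι₁, Matrix.one_mul]
    _ = ρ * (Y * ι₂ - ι₂ * X) := by rw [hY, add_sub_cancel_right]
    _ = X * (ρ * ι₂) - ρ * ι₂ * X := by
      rw [Matrix.mul_sub, ← Matrix.mul_assoc, hρY, Matrix.mul_assoc, Matrix.mul_assoc]

section MulVecLin

variable {l m n o R : Type*} [Fintype m] [CommRing R]

theorem submatrix_id_mul (M : Matrix l m R) (N : Matrix m n R) (f : o → l) :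
    M.submatrix f id * N = (M * N).submatrix f id := rfl

theorem mul_submatrix_id (M : Matrix l m R) (N : Matrix m n R) (f : o → n) :
    M * N.submatrix id f = (M * N).submatrix id f := rfl

theorem range_mulVecLin_eq_ker_of_biproduct [Fintype n] [DecidableEq n] [Fintype o]
    {A : Matrix n m R} {A' : Matrix m n R} {B : Matrix o n R} {B' : Matrix n o R} (hBA : B * A = 0)
    (hsum : A * A' + B' * B = 1) : LinearMap.range A.mulVecLin = LinearMap.ker B.mulVecLin := by
  ext v
  simp only [LinearMap.mem_range, LinearMap.mem_ker, mulVecLin_apply]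
  constructor
  · rintro ⟨w, rfl⟩
    simp [mulVec_mulVec, hBA]
  · intro hv
    refine ⟨A' *ᵥ v, ?_⟩
    rw [mulVec_mulVec, eq_sub_of_add_eq hsum, sub_mulVec, ← mulVec_mulVec, hv]
    simp

variable [DecidableEq m]

theorem mulVecLin_injective_of_mul_eq_one [Fintype n] {A : Matrix n m R} {B : Matrix m n R}
    (h : B * A = 1) : Function.Injective A.mulVecLin := fun v w hvw => by
  simpa [mulVec_mulVec, h] using congrArg B.mulVecLin hvw

theorem mulVecLin_surjective_of_mul_eq_one [Fintype n] {A : Matrix m n R} {B : Matrix n m R}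
    (h : A * B = 1) : Function.Surjective A.mulVecLin := fun v =>
  ⟨B *ᵥ v, by simp [mulVec_mulVec, h]⟩

end MulVecLin

theorem exists_commute_ne_zero_isHomogeneous_neg {n A R : Type*} [Fintype n] [DecidableEq n]
    [AddCommGroup A] [Finite A] [Semiring R] [NoZeroDivisors R] [Nontrivial R] {g : n → A}
    {c : A} {X : Matrix n n R} (hX : IsHomogeneous g g c X) (hnil : IsNilpotent X)
    (hg : Function.Surjective g) :
    ∃ G, Commute G X ∧ G ≠ 0 ∧ IsHomogeneous g g (-c) G := by
  obtain ⟨s, q, hkill, r, u, hu, hru⟩ :=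
    exists_fiber_of_minimal_nilpotency_order hnil hg (· + c)
  obtain ⟨y, rfl⟩ := hg s
  have hr : g r = g y + (q + 1) • c := by
    by_contra h
    exact hru ((hX.pow q) r u (by rw [hu, add_assoc, ← succ_nsmul']; exact h))
  have hrow : ∀ b, (X ^ (q + 1)) r b = 0 := fun b => by
    by_cases hb : g b = g y
    · exact hkill r b hb
    · exact (hX.pow (q + 1)) r b fun h => hb (add_right_cancel (h.symm.trans hr))
  refine ⟨∑ ij ∈ antidiagonal q, X ^ ij.1 * single y r 1 * X ^ ij.2,
    commute_sum_antidiagonal_pow_mul_pow (mul_single_eq_zero (fun a => hkill a y rfl) r 1)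
      (single_mul_eq_zero hrow y 1), fun hG => ?_, ?_⟩
  · have hE : single y r (1 : R) ≠ 0 := fun h =>
      one_ne_zero (α := R) (by simpa using congrFun₂ h y r)
    obtain ⟨J, hJ, hJ1⟩ := hnil.exists_pow_mul_ne_zero_and_pow_succ_mul_eq_zero hE
    obtain ⟨a, ha⟩ : ∃ a, (X ^ J) a y ≠ 0 := by
      by_contra! h
      exact hJ (mul_single_eq_zero h r 1)
    have hentry :=
      congrFun₂ (pow_mul_sum_antidiagonal_pow_mul_pow (x := X) (r := single y r 1) (n := q) hJ1) a u
    rw [hG, mul_zero, zero_apply, mul_single_mul_apply, mul_one] at hentry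
    exact mul_ne_zero ha hru hentry.symm
  · refine IsHomogeneous.sum _ fun ij hij => ?_
    have hdeg : ij.2 • c + (g y - g r + ij.1 • c) = -c := by
      rw [hr, ← HasAntidiagonal.mem_antidiagonal.1 hij, add_nsmul, add_nsmul, one_nsmul]
      abel
    simpa only [hdeg] using
      ((hX.pow ij.1).mul (isHomogeneous_single g g y r (1 : R))).mul (hX.pow ij.2)

end Matrix

section Cyc

variable {p : ℕ} {k : Type} [Field k] {d : ZMod p → ℕ}

variable (p d) in
def cycIdxDoubleEquiv : CycIdx p (d + d) ≃ CycIdx p d ⊕ CycIdx p d :=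
  (Equiv.sigmaCongrRight fun _ => finSumFinEquiv.symm).trans (Equiv.sigmaSumDistrib _ _)

theorem sumElim_fst_comp_cycIdxDoubleEquiv :
    Sum.elim Sigma.fst Sigma.fst ∘ cycIdxDoubleEquiv p d = Sigma.fst := by
  funext ⟨s, i⟩
  simp only [cycIdxDoubleEquiv, Function.comp_apply, Equiv.trans_apply,
    Equiv.sigmaCongrRight_apply, Equiv.sigmaSumDistrib_apply]
  cases finSumFinEquiv.symm i <;> rfl

variable [NeZero p]

theorem cycSupported_iff {X : Matrix (CycIdx p d) (CycIdx p d) k} :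
    CycSupported p k d X ↔ IsHomogeneous Sigma.fst Sigma.fst 1 X :=
  forall_comm

theorem cycBlockDiag_iff {e : ZMod p → ℕ} {f : Matrix (CycIdx p e) (CycIdx p d) k} :
    CycBlockDiag p k d e f ↔ IsHomogeneous Sigma.fst Sigma.fst 0 f := by
  simp only [CycBlockDiag, IsHomogeneous, add_zero]

variable (p k d) in
def CycSelfExtSplits (X : Matrix (CycIdx p d) (CycIdx p d) k) : Prop :=
  ∀ (e : ZMod p → ℕ) (Y : Matrix (CycIdx p e) (CycIdx p e) k),
      CycSupported p k e Y →
      ∀ (ι : Matrix (CycIdx p e) (CycIdx p d) k) (π : Matrix (CycIdx p d) (CycIdx p e) k),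
        CycBlockDiag p k d e ι → CycBlockDiag p k e d π →
        ι * X = Y * ι → π * Y = X * π →
        Function.Injective ι.mulVecLin → Function.Surjective π.mulVecLin →
        LinearMap.range ι.mulVecLin = LinearMap.ker π.mulVecLin →
        ∃ ρ : Matrix (CycIdx p d) (CycIdx p e) k,
          CycBlockDiag p k e d ρ ∧ ρ * Y = X * ρ ∧ ρ * ι = 1

theorem exists_retraction_of_cycSelfExtSplits {X Δ : Matrix (CycIdx p d) (CycIdx p d) k}
    (hsplit : CycSelfExtSplits p k d X) (hX : CycSupported p k d X)
    (hΔ : CycSupported p k d Δ) :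
    ∃ ρ : Matrix (CycIdx p d) (CycIdx p (d + d)) k,
      ρ * (fromBlocks X Δ 0 X).submatrix (cycIdxDoubleEquiv p d) (cycIdxDoubleEquiv p d) = X * ρ ∧
      ρ * (fromRows (1 : Matrix (CycIdx p d) (CycIdx p d) k) 0).submatrix
        (cycIdxDoubleEquiv p d) id = 1 := by
  set σ := cycIdxDoubleEquiv p d
  have hσ : Sum.elim Sigma.fst Sigma.fst ∘ σ = Sigma.fst := sumElim_fst_comp_cycIdxDoubleEquiv
  have hY : CycSupported p k (d + d) ((fromBlocks X Δ 0 X).submatrix σ σ) := by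
    have := ((cycSupported_iff.1 hX).fromBlocks (cycSupported_iff.1 hΔ)
      (isHomogeneous_zero (R := k)) (cycSupported_iff.1 hX)).submatrix σ σ
    rwa [hσ, ← cycSupported_iff] at this
  have hι : CycBlockDiag p k d (d + d) ((fromRows 1 0).submatrix σ id) := by
    have := ((isHomogeneous_one (R := k) Sigma.fst).fromRows
      (isHomogeneous_zero (gm := Sigma.fst))).submatrix σ id
    rwa [hσ, Function.comp_id, ← cycBlockDiag_iff] at this
  have hπ : CycBlockDiag p k (d + d) d ((fromCols 0 1).submatrix id σ) := by
    have := ((isHomogeneous_zero (R := k) (gn := Sigma.fst)).fromCols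
      (isHomogeneous_one Sigma.fst)).submatrix id σ
    rwa [hσ, Function.comp_id, ← cycBlockDiag_iff] at this
  have hsum : fromRows (1 : Matrix (CycIdx p d) (CycIdx p d) k) 0 *
      fromCols (1 : Matrix (CycIdx p d) (CycIdx p d) k) 0 +
      fromRows 0 (1 : Matrix (CycIdx p d) (CycIdx p d) k) *
      fromCols 0 (1 : Matrix (CycIdx p d) (CycIdx p d) k) = 1 := by
    simp only [fromRows_mul_fromCols, fromBlocks_add]
    simp
  obtain ⟨ρ, -, hρ⟩ := hsplit (d + d) _ hY _ _ hι hπ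
    (by simp [submatrix_id_mul, fromBlocks_mul_fromRows, fromRows_mul])
    (by simp [mul_submatrix_id, fromCols_mul_fromBlocks, mul_fromCols])
    (mulVecLin_injective_of_mul_eq_one (B := (fromCols 1 0).submatrix id σ)
      (by simp [fromCols_mul_fromRows]))
    (mulVecLin_surjective_of_mul_eq_one (B := (fromRows 0 1).submatrix σ id)
      (by simp [fromCols_mul_fromRows]))
    (range_mulVecLin_eq_ker_of_biproduct (by simp [fromCols_mul_fromRows])
      ((congrArg (submatrix · σ σ) hsum).trans (submatrix_one_equiv σ)))
  exact ⟨ρ, hρ⟩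

theorem exists_eq_commutator_of_cycSelfExtSplits {X Δ : Matrix (CycIdx p d) (CycIdx p d) k}
    (hsplit : CycSelfExtSplits p k d X) (hX : CycSupported p k d X)
    (hΔ : CycSupported p k d Δ) : ∃ ρ, Δ = X * ρ - ρ * X := by
  obtain ⟨ρ, hρY, hρι⟩ := exists_retraction_of_cycSelfExtSplits hsplit hX hΔ
  refine ⟨_, eq_commutator_of_retraction (ι₂ := (fromRows 0
    (1 : Matrix (CycIdx p d) (CycIdx p d) k)).submatrix (cycIdxDoubleEquiv p d) id) ?_ hρY hρι⟩
  simp only [submatrix_mul_equiv, submatrix_id_mul, fromBlocks_mul_fromRows, fromRows_mul]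
  ext i j
  simp only [Matrix.add_apply, submatrix_apply]
  rcases cycIdxDoubleEquiv p d i with i | i <;> simp

end Cyc

theorem rigid_nilpotent_cyclic_rep_misses_a_vertex_general
    (p : ℕ) [NeZero p] (k : Type) [Field k]
    (d : ZMod p → ℕ) (X : Matrix (CycIdx p d) (CycIdx p d) k)
    (hsupp : CycSupported p k d X)
    (hnilp : ∃ m : ℕ, X ^ m = 0)
    (hsplit : ∀ (e : ZMod p → ℕ) (Y : Matrix (CycIdx p e) (CycIdx p e) k),
      CycSupported p k e Y →
      ∀ (ι : Matrix (CycIdx p e) (CycIdx p d) k) (π : Matrix (CycIdx p d) (CycIdx p e) k),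
        CycBlockDiag p k d e ι → CycBlockDiag p k e d π →
        ι * X = Y * ι → π * Y = X * π →
        Function.Injective ι.mulVecLin → Function.Surjective π.mulVecLin →
        LinearMap.range ι.mulVecLin = LinearMap.ker π.mulVecLin →
        ∃ ρ : Matrix (CycIdx p d) (CycIdx p e) k,
          CycBlockDiag p k e d ρ ∧ ρ * Y = X * ρ ∧ ρ * ι = 1) :
    ∃ u : ZMod p, d u = 0 := by
  by_contra! hd
  have hfst : Function.Surjective (Sigma.fst : CycIdx p d → ZMod p) := fun s =>
    ⟨⟨s, ⟨0, Nat.pos_of_ne_zero (hd s)⟩⟩, rfl⟩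
  obtain ⟨G, hGX, hG0, hG⟩ :=
    exists_commute_ne_zero_isHomogeneous_neg (cycSupported_iff.1 hsupp) hnilp hfst
  obtain ⟨α, β, hαβ, hGαβ⟩ := hG.exists_apply_ne_zero hG0
  have hΔ : CycSupported p k d (single β α 1) := by
    refine cycSupported_iff.2 fun i j h => single_apply_of_ne _ _ _ _ _ ?_
    rintro ⟨rfl, rfl⟩
    exact h (by rw [hαβ, neg_add_cancel_right])
  obtain ⟨ρ, hρ⟩ := exists_eq_commutator_of_cycSelfExtSplits hsplit hsupp hΔ
  have htrace := trace_mul_commutator_eq_zero hGX ρ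
  rw [← hρ, trace_mul_single, MulOpposite.op_one, one_smul] at htrace
  exact hGαβ htrace

/-- **A rigid nilpotent representation of the cyclic quiver misses a vertex.**
Let `T = (V_s, x_s)` be a nilpotent finite-dimensional representation of the cyclic
quiver with `p ≥ 1` vertices over a field `k`, of dimension vector `d`.  If every
short exact sequence of representations `0 → T → E → T → 0` splits (i.e. `T` has no
nontrivial self-extension), then there is a vertex `u` with `V_u = 0`, i.e.
`d u = 0`; equivalently, `T` has no composition factor isomorphic to the simple
`S^{(u)}`. -/
theorem rigid_nilpotent_cyclic_rep_misses_a_vertex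
    (p : ℕ) [NeZero p] (hp : 1 ≤ p) (k : Type) [Field k]
    (d : ZMod p → ℕ) (X : Matrix (CycIdx p d) (CycIdx p d) k)
    (hsupp : CycSupported p k d X)
    (hnilp : ∃ m : ℕ, X ^ m = 0)
    (hsplit : ∀ (e : ZMod p → ℕ) (Y : Matrix (CycIdx p e) (CycIdx p e) k),
      CycSupported p k e Y →
      ∀ (ι : Matrix (CycIdx p e) (CycIdx p d) k) (π : Matrix (CycIdx p d) (CycIdx p e) k),
        CycBlockDiag p k d e ι → CycBlockDiag p k e d π →
        ι * X = Y * ι → π * Y = X * π →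
        Function.Injective ι.mulVecLin → Function.Surjective π.mulVecLin →
        LinearMap.range ι.mulVecLin = LinearMap.ker π.mulVecLin →
        ∃ ρ : Matrix (CycIdx p d) (CycIdx p e) k,
          CycBlockDiag p k e d ρ ∧ ρ * Y = X * ρ ∧ ρ * ι = 1) :
    ∃ u : ZMod p, d u = 0 :=
  rigid_nilpotent_cyclic_rep_misses_a_vertex_general p k d X hsupp hnilp hsplit
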